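/- arXiv:2003.10767 — 5 statements merged into one kernel-verified Lean document; each statement's English description precedes it below -/
import Mathlib

section
/- Let S be a nonempty set, f : S → ℝ a nonnegative function, and θ₀ ∈ S a point with f(θ₀) ≤ f(θ) for all θ ∈ S. Let N ≥ 1 be an integer and σ̄² > 0. Define g(θ, v) = N·log(π·v) + (N·σ̄² + f(θ))/v for θ ∈ S and v > 0. Then for every θ ∈ S and every v > 0 one has g(θ, v) ≥ g(θ₀, σ̄² + f(θ₀)/N), with equality if and only if f(θ) = f(θ₀) and v = σ̄² + f(θ₀)/N. -/
/-! With `s θ = σ̄² + f θ / N`, one has `g θ v = N log π + N (log v + s θ / v)`. The inequality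
`log x ≤ x - 1` at `x = s / v` gives `log v + s / v ≥ log s + 1`, with equality only at `v = s`,
and `log v + s / v` increases with `s`; so the minimum is `N log π + N (log s(θ₀) + 1)`,
attained exactly when `s θ = s θ₀` and `v = s θ₀`. -/

open Real

namespace Real

theorem log_add_one_le_log_add_div {a v : ℝ} (ha : 0 < a) (hv : 0 < v) :
    log a + 1 ≤ log v + a / v := by
  have h := log_le_sub_one_of_pos (div_pos ha hv)
  rw [log_div ha.ne' hv.ne'] at h
  linarith

theorem log_add_div_eq_log_add_one_iff {a v : ℝ} (ha : 0 < a) (hv : 0 < v) :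
    log v + a / v = log a + 1 ↔ v = a := by
  refine ⟨fun h => ?_, fun h => by rw [h, div_self ha.ne']⟩
  by_contra hne
  have hlt := log_lt_sub_one_of_pos (div_pos ha hv)
    (fun h1 => hne ((div_eq_one_iff_eq hv.ne').mp h1).symm)
  rw [log_div ha.ne' hv.ne'] at hlt
  linarith

theorem log_add_one_le_log_add_div_of_le {a s v : ℝ} (ha : 0 < a) (has : a ≤ s) (hv : 0 < v) :
    log a + 1 ≤ log v + s / v :=
  (log_add_one_le_log_add_div ha hv).trans
    (add_le_add_right (div_le_div_of_nonneg_right has hv.le) _)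

theorem log_add_div_eq_log_add_one_iff_of_le {a s v : ℝ} (ha : 0 < a) (has : a ≤ s)
    (hv : 0 < v) : log v + s / v = log a + 1 ↔ s = a ∧ v = a := by
  have hsplit : log v + s / v = (log v + a / v) + (s - a) / v := by ring
  have hfirst := log_add_one_le_log_add_div ha hv
  have hsecond : 0 ≤ (s - a) / v := div_nonneg (sub_nonneg.mpr has) hv.le
  rw [hsplit, ← log_add_div_eq_log_add_one_iff ha hv]
  constructor
  · intro h
    have hsa : (s - a) / v = 0 := by linarith
    rw [div_eq_zero_iff, sub_eq_zero] at hsa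
    exact ⟨hsa.resolve_right hv.ne', by linarith⟩
  · rintro ⟨rfl, hva⟩
    rw [sub_self, zero_div, add_zero, hva]

end Real

theorem mul_log_pi_mul_add_div_eq {N σ F v : ℝ} (hN : N ≠ 0) (hv : 0 < v) :
    N * log (π * v) + (N * σ + F) / v = N * log π + N * (log v + (σ + F / N) / v) := by
  rw [log_mul pi_pos.ne' hv.ne']
  field_simp
  ring

theorem stmt_0_general {S : Type*} (f : S → ℝ) (hf : ∀ θ, 0 ≤ f θ)
    (θ₀ : S) (hθ₀ : ∀ θ, f θ₀ ≤ f θ)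
    (N : ℕ) (hN : 1 ≤ N) (σbar2 : ℝ) (hσ : 0 < σbar2)
    (g : S → ℝ → ℝ)
    (hg : ∀ θ v, g θ v = (N : ℝ) * Real.log (Real.pi * v) + ((N : ℝ) * σbar2 + f θ) / v) :
    ∀ (θ : S) (v : ℝ), 0 < v →
      g θ₀ (σbar2 + f θ₀ / N) ≤ g θ v ∧
      (g θ v = g θ₀ (σbar2 + f θ₀ / N) ↔ f θ = f θ₀ ∧ v = σbar2 + f θ₀ / N) := by
  intro θ v hv
  have hNpos : (0 : ℝ) < N := by exact_mod_cast hN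
  set s : S → ℝ := fun θ => σbar2 + f θ / N with hs
  have hs₀ : 0 < s θ₀ := add_pos_of_pos_of_nonneg hσ (div_nonneg (hf θ₀) hNpos.le)
  have hs₀s : s θ₀ ≤ s θ := add_le_add_right (div_le_div_of_nonneg_right (hθ₀ θ) hNpos.le) _
  have hg_eq : ∀ θ v, 0 < v → g θ v = N * log π + N * (log v + s θ / v) := fun θ v hv => by
    rw [hg, mul_log_pi_mul_add_div_eq hNpos.ne' hv]
  have hg₀ : g θ₀ (s θ₀) = N * log π + N * (log (s θ₀) + 1) := by
    rw [hg_eq θ₀ _ hs₀, div_self hs₀.ne']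
  have hsθ : s θ = s θ₀ ↔ f θ = f θ₀ := by
    simp only [hs, add_right_inj, div_left_inj' hNpos.ne']
  refine ⟨?_, ?_⟩
  · rw [hg₀, hg_eq θ v hv]
    gcongr N * log π + N * ?_
    exact log_add_one_le_log_add_div_of_le hs₀ hs₀s hv
  · rw [hg₀, hg_eq θ v hv, add_right_inj, mul_right_inj' hNpos.ne',
      log_add_div_eq_log_add_one_iff_of_le hs₀ hs₀s hv, hsθ]

/-- pseudo-true parameter and pseudo-true noise variance minimize the
expected negative log-likelihood `g θ v = N·log(π·v) + (N·σ̄² + f θ)/v`. -/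
theorem stmt_0 {S : Type*} [Nonempty S] (f : S → ℝ) (hf : ∀ θ, 0 ≤ f θ)
    (θ₀ : S) (hθ₀ : ∀ θ, f θ₀ ≤ f θ)
    (N : ℕ) (hN : 1 ≤ N) (σbar2 : ℝ) (hσ : 0 < σbar2)
    (g : S → ℝ → ℝ)
    (hg : ∀ θ v, g θ v = (N : ℝ) * Real.log (Real.pi * v) + ((N : ℝ) * σbar2 + f θ) / v) :
    ∀ (θ : S) (v : ℝ), 0 < v →
      g θ₀ (σbar2 + f θ₀ / N) ≤ g θ v ∧
      (g θ v = g θ₀ (σbar2 + f θ₀ / N) ↔ f θ = f θ₀ ∧ v = σbar2 + f θ₀ / N) :=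
  stmt_0_general f hf θ₀ hθ₀ N hN σbar2 hσ g hg
end

section
/- Suppose the frequencies are perfectly harmonic, i.e., ω_k = k·ω̃₀ for k = 1,…,K with ω̃₀ > 0, and a_k > 0 for all k. Then q_K(ω̃₀) = 0, and q_K(ω) > 0 for every real ω ≠ ω̃₀. In particular, ω̃₀ is the unique global minimizer of q_K over ℝ. -/
open Finset

/-- The optimal-transport cost `q_L(ω) = 2π·Σ_{k=1}^K a_k²·min_{ℓ∈{1,…,L}} (ℓω − ω_k)²`. -/
noncomputable def qcost (K L : ℕ) (hL : 1 ≤ L) (a ω : ℕ → ℝ) (x : ℝ) : ℝ :=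
  2 * Real.pi * ∑ k ∈ Finset.Icc 1 K, (a k) ^ 2 *
    (Finset.Icc 1 L).inf' (Finset.nonempty_Icc.mpr hL)
      (fun ℓ => ((ℓ : ℝ) * x - ω k) ^ 2)

/-!
Since the weights `a_k` are positive, `q_L(x)` vanishes exactly when every `ω_k` is a multiple
`ℓ x` with `1 ≤ ℓ ≤ L`. For `ω_k = k ω₀` the point `x = ω₀` does this with `ℓ = k`. Conversely,
if `ω₁ = ℓ₁ x` and `ω_K = ℓ_K x`, then `ℓ_K x = K ℓ₁ x`, so (unless `x = 0 = ω₀`) `K ℓ₁ = ℓ_K ≤ K`,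
forcing `ℓ₁ = 1` and `x = ω₀`.
-/

theorem Finset.inf'_eq_iff_exists_of_le {ι α : Type*} [LinearOrder α] {s : Finset ι}
    (H : s.Nonempty) {f : ι → α} {c : α} (hf : ∀ i ∈ s, c ≤ f i) :
    s.inf' H f = c ↔ ∃ i ∈ s, f i = c := by
  constructor
  · intro h
    obtain ⟨i, hi, hinf⟩ := s.exists_mem_eq_inf' H f
    exact ⟨i, hi, hinf ▸ h⟩
  · rintro ⟨i, hi, hfi⟩
    exact le_antisymm (s.inf'_le_of_le f hi hfi.le) (s.le_inf' H f hf)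

theorem qcost_nonneg (K L : ℕ) (hL : 1 ≤ L) (a ω : ℕ → ℝ) (x : ℝ) :
    0 ≤ qcost K L hL a ω x := by
  unfold qcost
  refine mul_nonneg (by positivity) (sum_nonneg fun k _ => mul_nonneg (sq_nonneg _) ?_)
  exact le_inf' _ _ fun ℓ _ => sq_nonneg _

theorem qcost_eq_zero_iff {K L : ℕ} (hL : 1 ≤ L) {a : ℕ → ℝ} (ω : ℕ → ℝ) (x : ℝ)
    (ha : ∀ k ∈ Icc 1 K, 0 < a k) :
    qcost K L hL a ω x = 0 ↔ ∀ k ∈ Icc 1 K, ∃ ℓ ∈ Icc 1 L, (ℓ : ℝ) * x = ω k := by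
  have hmin_nonneg : ∀ k, ∀ ℓ ∈ Icc 1 L, (0 : ℝ) ≤ ((ℓ : ℝ) * x - ω k) ^ 2 :=
    fun _ _ _ => sq_nonneg _
  unfold qcost
  rw [mul_eq_zero, or_iff_right (by positivity),
    sum_eq_zero_iff_of_nonneg fun k _ =>
      mul_nonneg (sq_nonneg _) (le_inf' _ _ (hmin_nonneg k))]
  refine forall₂_congr fun k hk => ?_
  rw [mul_eq_zero, or_iff_right (pow_ne_zero 2 (ha k hk).ne'),
    inf'_eq_iff_exists_of_le _ (hmin_nonneg k)]
  simp only [sq_eq_zero_iff, sub_eq_zero]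

theorem eq_of_natCast_mul_eq_of_le {K ℓ₁ ℓ : ℕ} {x y : ℝ} (hK : 1 ≤ K) (hℓ₁ : 1 ≤ ℓ₁)
    (hℓ : ℓ ≤ K) (h₁ : (ℓ₁ : ℝ) * x = y) (h : (ℓ : ℝ) * x = K * y) : x = y := by
  rcases eq_or_ne x 0 with rfl | hx
  · simpa using h₁
  have hℓ_eq : ℓ = K * ℓ₁ := by
    have : (ℓ : ℝ) = K * ℓ₁ := mul_right_cancel₀ hx (by rw [h, ← h₁, mul_assoc])
    exact_mod_cast this
  have : ℓ₁ = 1 := by nlinarith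
  simpa [this] using h₁

theorem stmt_2_general (K : ℕ) (hK : 1 ≤ K) (a ω : ℕ → ℝ)
    (ha : ∀ k ∈ Finset.Icc 1 K, 0 < a k)
    (ω₀' : ℝ)
    (hharm : ∀ k ∈ Finset.Icc 1 K, ω k = (k : ℝ) * ω₀') :
    qcost K K hK a ω ω₀' = 0 ∧ ∀ x : ℝ, x ≠ ω₀' → 0 < qcost K K hK a ω x := by
  refine ⟨(qcost_eq_zero_iff hK ω ω₀' ha).2 fun k hk => ⟨k, hk, (hharm k hk).symm⟩,
    fun x hx => (qcost_nonneg K K hK a ω x).lt_of_ne' fun hzero => hx ?_⟩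
  have h1K : 1 ∈ Icc 1 K := mem_Icc.2 ⟨le_rfl, hK⟩
  have hKK : K ∈ Icc 1 K := mem_Icc.2 ⟨hK, le_rfl⟩
  have hmatch := (qcost_eq_zero_iff hK ω x ha).1 hzero
  obtain ⟨ℓ₁, hℓ₁, h₁⟩ := hmatch 1 h1K
  obtain ⟨ℓ, hℓ, h⟩ := hmatch K hKK
  rw [hharm 1 h1K, Nat.cast_one, one_mul] at h₁
  rw [hharm K hKK] at h
  exact eq_of_natCast_mul_eq_of_le hK (mem_Icc.1 hℓ₁).1 (mem_Icc.1 hℓ).2 h₁ h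

/-- for a perfectly harmonic spectrum (`ω_k = k·ω̃₀`, `a_k > 0`),
`q_K(ω̃₀) = 0` and `q_K(ω) > 0` for every `ω ≠ ω̃₀`; in particular `ω̃₀` is the
unique global minimizer of `q_K`. -/
theorem stmt_2 (K : ℕ) (hK : 1 ≤ K) (a ω : ℕ → ℝ)
    (ha : ∀ k ∈ Finset.Icc 1 K, 0 < a k)
    (ω₀' : ℝ) (hω₀' : 0 < ω₀')
    (hharm : ∀ k ∈ Finset.Icc 1 K, ω k = (k : ℝ) * ω₀') :
    qcost K K hK a ω ω₀' = 0 ∧ ∀ x : ℝ, x ≠ ω₀' → 0 < qcost K K hK a ω x :=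
  stmt_2_general K hK a ω ha ω₀' hharm
end

section
/- Under the inharmonic hypothesis, let L be an integer with K ≤ L ≤ K+1. Then for every ω ∈ [ω̃₀ − ‖Δ‖∞, ω̃₀ + ‖Δ‖∞], every k ∈ {1,…,K}, and every ℓ ∈ {1,…,L} with ℓ ≠ k, one has (k·ω − ω_k)² < (ℓ·ω − ω_k)². In particular, k is the unique minimizer of ℓ ↦ (ℓ·ω − ω_k)² over ℓ ∈ {1,…,L}. -/
open Finset

/-- under the inharmonic hypothesis, for `K ≤ L ≤ K+1`, for every
`ω ∈ [ω̃₀ − ‖Δ‖∞, ω̃₀ + ‖Δ‖∞]`, `k ∈ {1,…,K}` and `ℓ ∈ {1,…,L}` with `ℓ ≠ k`,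
one has `(k·ω − ω_k)² < (ℓ·ω − ω_k)²`; in particular `k` is the unique minimizer
of `ℓ ↦ (ℓ·ω − ω_k)²` over `ℓ ∈ {1,…,L}`. -/
theorem stmt_5 (K : ℕ) (hK : 1 ≤ K) (ω Δ : ℕ → ℝ) (ω₀' : ℝ) (hω₀' : 0 < ω₀')
    (hfreq : ∀ k ∈ Finset.Icc 1 K, ω k = (k : ℝ) * ω₀' + Δ k)
    (hΔ : (Finset.Icc 1 K).sup' (Finset.nonempty_Icc.mpr hK) (fun k => |Δ k|)
          < ω₀' / (2 * (K : ℝ) + 3))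
    (L : ℕ) (hL₁ : K ≤ L) (hL₂ : L ≤ K + 1) :
    ∀ x : ℝ,
      x ∈ Set.Icc
        (ω₀' - (Finset.Icc 1 K).sup' (Finset.nonempty_Icc.mpr hK) (fun k => |Δ k|))
        (ω₀' + (Finset.Icc 1 K).sup' (Finset.nonempty_Icc.mpr hK) (fun k => |Δ k|)) →
      ∀ k ∈ Finset.Icc 1 K, ∀ ℓ ∈ Finset.Icc 1 L, ℓ ≠ k →
        ((k : ℝ) * x - ω k) ^ 2 < ((ℓ : ℝ) * x - ω k) ^ 2 := by
  set M := (Finset.Icc 1 K).sup' (Finset.nonempty_Icc.mpr hK) (fun k => |Δ k|) with hMdef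
  have hM0 : 0 ≤ M :=
    le_trans (abs_nonneg (Δ 1)) (Finset.le_sup' (fun k => |Δ k|) (Finset.mem_Icc.mpr ⟨le_refl 1, hK⟩))
  have hK0 : (0:ℝ) < 2 * (K : ℝ) + 3 := by positivity
  have hΔ' : M * (2 * (K : ℝ) + 3) < ω₀' := (lt_div_iff₀ hK0).mp hΔ
  intro x hx k hk ℓ hℓ hne
  obtain ⟨hk1, hkK⟩ := Finset.mem_Icc.mp hk
  obtain ⟨hℓ1, hℓL⟩ := Finset.mem_Icc.mp hℓ
  have hMk : |Δ k| ≤ M := Finset.le_sup' (fun k => |Δ k|) hk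
  have hωk := hfreq k hk
  have hxb : |x - ω₀'| ≤ M := by
    rw [abs_le]
    exact ⟨by linarith [hx.1], by linarith [hx.2]⟩
  have hkK' : (k:ℝ) ≤ K := by exact_mod_cast hkK
  have hk0 : (0:ℝ) ≤ (k:ℝ) := Nat.cast_nonneg k
  have hℓ0 : (0:ℝ) ≤ (ℓ:ℝ) := Nat.cast_nonneg ℓ
  have hℓK : (ℓ:ℝ) ≤ (K:ℝ) + 1 := by
    have : ℓ ≤ K + 1 := le_trans hℓL hL₂
    exact_mod_cast this
  have hd : (1:ℝ) ≤ |(ℓ:ℝ) - (k:ℝ)| := by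
    have h1 : ((ℓ:ℤ) - (k:ℤ)) ≠ 0 := by
      intro h
      exact hne (by omega)
    have h2 : (1:ℤ) ≤ |(ℓ:ℤ) - (k:ℤ)| := Int.one_le_abs h1
    have : ((1:ℤ):ℝ) ≤ (|(ℓ:ℤ) - (k:ℤ)| : ℝ) := by exact_mod_cast h2
    simpa [Int.cast_abs] using this
  -- bound on |k*x - ω k|
  have ha : |(k:ℝ) * x - ω k| ≤ ((K:ℝ) + 1) * M := by
    have heq : (k:ℝ) * x - ω k = (k:ℝ) * (x - ω₀') - Δ k := by rw [hωk]; ring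
    rw [heq]
    calc |(k:ℝ) * (x - ω₀') - Δ k| ≤ |(k:ℝ) * (x - ω₀')| + |Δ k| := abs_sub _ _
      _ = (k:ℝ) * |x - ω₀'| + |Δ k| := by rw [abs_mul, abs_of_nonneg hk0]
      _ ≤ (K:ℝ) * M + M := by
          have : (k:ℝ) * |x - ω₀'| ≤ (K:ℝ) * M :=
            mul_le_mul hkK' hxb (abs_nonneg _) (by positivity)
          linarith
      _ = ((K:ℝ) + 1) * M := by ring
  -- lower bound on |ℓ*x - ω k|
  have hb : ω₀' - ((K:ℝ) + 2) * M ≤ |(ℓ:ℝ) * x - ω k| := by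
    have heq : (ℓ:ℝ) * x - ω k = ((ℓ:ℝ) - (k:ℝ)) * ω₀' - (Δ k - (ℓ:ℝ) * (x - ω₀')) := by
      rw [hωk]; ring
    rw [heq]
    have h1 : |((ℓ:ℝ) - (k:ℝ)) * ω₀'| - |Δ k - (ℓ:ℝ) * (x - ω₀')| ≤
        |((ℓ:ℝ) - (k:ℝ)) * ω₀' - (Δ k - (ℓ:ℝ) * (x - ω₀'))| := abs_sub_abs_le_abs_sub _ _
    have h2 : ω₀' ≤ |((ℓ:ℝ) - (k:ℝ)) * ω₀'| := by
      rw [abs_mul, abs_of_pos hω₀']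
      nlinarith
    have h3 : |Δ k - (ℓ:ℝ) * (x - ω₀')| ≤ ((K:ℝ) + 1) * M + M := by
      calc |Δ k - (ℓ:ℝ) * (x - ω₀')| ≤ |Δ k| + |(ℓ:ℝ) * (x - ω₀')| := abs_sub _ _
        _ = |Δ k| + (ℓ:ℝ) * |x - ω₀'| := by rw [abs_mul, abs_of_nonneg hℓ0]
        _ ≤ M + ((K:ℝ) + 1) * M := by
            have : (ℓ:ℝ) * |x - ω₀'| ≤ ((K:ℝ) + 1) * M :=
              mul_le_mul hℓK hxb (abs_nonneg _) (by positivity)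
            linarith
        _ = ((K:ℝ) + 1) * M + M := by ring
    linarith
  have habs : |(k:ℝ) * x - ω k| < |(ℓ:ℝ) * x - ω k| := by
    have : ((K:ℝ) + 1) * M < ω₀' - ((K:ℝ) + 2) * M := by nlinarith
    linarith
  calc ((k:ℝ) * x - ω k) ^ 2 = |(k:ℝ) * x - ω k| ^ 2 := (sq_abs _).symm
    _ < |(ℓ:ℝ) * x - ω k| ^ 2 := by
        exact pow_lt_pow_left₀ habs (abs_nonneg _) (by norm_num)
    _ = ((ℓ:ℝ) * x - ω k) ^ 2 := sq_abs _
end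

section
/- Under the inharmonic hypothesis, let L be an integer with K ≤ L ≤ K+1. Then for every ω ∈ [ω̃₀ − ‖Δ‖∞, ω̃₀ + ‖Δ‖∞], the transport cost satisfies q_L(ω) = 2π·Σ_{k=1}^K a_k²·(k·(ω − ω̃₀) − Δ_k)². -/
open Finset

lemma abs_natCast_mul_sub_le {n : ℕ} {e d δ : ℝ} (he : |e| ≤ δ) (hd : |d| ≤ δ) :
    |(n : ℝ) * e - d| ≤ (n + 1) * δ := calc
  |(n : ℝ) * e - d| ≤ n * |e| + |d| := by
    simpa [abs_mul] using abs_sub ((n : ℝ) * e) d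
  _ ≤ (n + 1) * δ := by nlinarith [(Nat.cast_nonneg n : (0 : ℝ) ≤ n)]

lemma one_le_abs_natCast_sub_natCast {k ℓ : ℕ} (h : ℓ ≠ k) : (1 : ℝ) ≤ |(ℓ : ℝ) - k| := by
  rcases Nat.lt_or_gt_of_ne h with h | h
  · rw [abs_sub_comm, le_abs]
    left
    have : (ℓ : ℝ) + 1 ≤ k := by exact_mod_cast h
    linarith
  · rw [le_abs]
    left
    have : (k : ℝ) + 1 ≤ ℓ := by exact_mod_cast h
    linarith

lemma sq_sub_le_sq_of_ne {K k ℓ : ℕ} {ω₀ x d δ : ℝ} (hk : k ≤ K) (hℓ : ℓ ≤ K + 1)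
    (hne : ℓ ≠ k) (hx : |x - ω₀| ≤ δ) (hd : |d| ≤ δ) (hω₀ : (2 * K + 3) * δ ≤ ω₀) :
    ((k : ℝ) * (x - ω₀) - d) ^ 2 ≤ ((ℓ : ℝ) * x - (k * ω₀ + d)) ^ 2 := by
  have hδ : 0 ≤ δ := (abs_nonneg _).trans hd
  have hkK : (k : ℝ) ≤ K := by exact_mod_cast hk
  have hℓK : (ℓ : ℝ) ≤ K + 1 := by exact_mod_cast hℓ
  have hsmall : |(k : ℝ) * (x - ω₀) - d| ≤ (K + 1) * δ :=
    (abs_natCast_mul_sub_le hx hd).trans (by nlinarith)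
  have hdrift : |(ℓ : ℝ) * (x - ω₀) - d| ≤ (K + 2) * δ :=
    (abs_natCast_mul_sub_le hx hd).trans (by nlinarith)
  have hjump : ω₀ ≤ |((ℓ : ℝ) - k) * ω₀| := by
    have hω₀_nonneg : 0 ≤ ω₀ := le_trans (by positivity) hω₀
    rw [abs_mul, abs_of_nonneg hω₀_nonneg]
    nlinarith [one_le_abs_natCast_sub_natCast hne]
  have hlarge : (K + 1) * δ ≤ |(ℓ : ℝ) * x - (k * ω₀ + d)| := calc
    (K + 1) * δ ≤ |((ℓ : ℝ) - k) * ω₀| - |(ℓ : ℝ) * (x - ω₀) - d| := by linarith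
    _ ≤ |((ℓ : ℝ) - k) * ω₀ + ((ℓ : ℝ) * (x - ω₀) - d)| := abs_sub_abs_le_abs_add _ _
    _ = |(ℓ : ℝ) * x - (k * ω₀ + d)| := by ring_nf
  exact sq_le_sq.mpr (hsmall.trans hlarge)

lemma inf'_sq_sub_eq_of_near_harmonic {K L k : ℕ} (hk : k ∈ Icc 1 K) (hKL : K ≤ L)
    (hLK : L ≤ K + 1) {ω₀ x d δ : ℝ} (hx : |x - ω₀| ≤ δ) (hd : |d| ≤ δ)
    (hω₀ : (2 * K + 3) * δ ≤ ω₀) (hL : (Icc 1 L).Nonempty) :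
    (Icc 1 L).inf' hL (fun ℓ => ((ℓ : ℝ) * x - (k * ω₀ + d)) ^ 2) =
      ((k : ℝ) * (x - ω₀) - d) ^ 2 := by
  obtain ⟨hk₁, hkK⟩ := mem_Icc.mp hk
  refine le_antisymm ((inf'_le _ (mem_Icc.mpr ⟨hk₁, hkK.trans hKL⟩)).trans_eq (by ring))
    (le_inf' _ _ fun ℓ hℓ => ?_)
  rcases eq_or_ne ℓ k with rfl | hne
  · exact le_of_eq (by ring)
  · exact sq_sub_le_sq_of_ne hkK ((mem_Icc.mp hℓ).2.trans hLK) hne hx hd hω₀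

theorem stmt_6_general (K : ℕ) (hK : 1 ≤ K) (a ω Δ : ℕ → ℝ)
    (ω₀' : ℝ)
    (hfreq : ∀ k ∈ Finset.Icc 1 K, ω k = (k : ℝ) * ω₀' + Δ k)
    (hΔ : (Finset.Icc 1 K).sup' (Finset.nonempty_Icc.mpr hK) (fun k => |Δ k|)
          < ω₀' / (2 * (K : ℝ) + 3))
    (L : ℕ) (hL₁ : K ≤ L) (hL₂ : L ≤ K + 1) :
    ∀ x : ℝ,
      x ∈ Set.Icc
        (ω₀' - (Finset.Icc 1 K).sup' (Finset.nonempty_Icc.mpr hK) (fun k => |Δ k|))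
        (ω₀' + (Finset.Icc 1 K).sup' (Finset.nonempty_Icc.mpr hK) (fun k => |Δ k|)) →
      qcost K L (hK.trans hL₁) a ω x =
        2 * Real.pi * ∑ k ∈ Finset.Icc 1 K,
          (a k) ^ 2 * ((k : ℝ) * (x - ω₀') - Δ k) ^ 2 := by
  intro x hx
  set δ := (Icc 1 K).sup' (nonempty_Icc.mpr hK) (fun k => |Δ k|)
  have hxδ : |x - ω₀'| ≤ δ := abs_sub_le_iff.mpr ⟨by linarith [hx.2], by linarith [hx.1]⟩
  have hω₀ : (2 * K + 3) * δ ≤ ω₀' := by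
    rw [lt_div_iff₀ (by positivity)] at hΔ
    linarith
  unfold qcost
  congr 1
  refine sum_congr rfl fun k hk => ?_
  rw [hfreq k hk,
    inf'_sq_sub_eq_of_near_harmonic hk hL₁ hL₂ hxδ (le_sup' (fun k => |Δ k|) hk) hω₀]

/-- under the inharmonic hypothesis, for `K ≤ L ≤ K+1` and every
`ω ∈ [ω̃₀ − ‖Δ‖∞, ω̃₀ + ‖Δ‖∞]`, the transport cost satisfies
`q_L(ω) = 2π·Σ_{k=1}^K a_k²·(k·(ω − ω̃₀) − Δ_k)²`. -/
theorem stmt_6 (K : ℕ) (hK : 1 ≤ K) (a ω Δ : ℕ → ℝ)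
    (ha : ∀ k ∈ Finset.Icc 1 K, 0 < a k)
    (ω₀' : ℝ) (hω₀' : 0 < ω₀')
    (hfreq : ∀ k ∈ Finset.Icc 1 K, ω k = (k : ℝ) * ω₀' + Δ k)
    (hΔ : (Finset.Icc 1 K).sup' (Finset.nonempty_Icc.mpr hK) (fun k => |Δ k|)
          < ω₀' / (2 * (K : ℝ) + 3))
    (L : ℕ) (hL₁ : K ≤ L) (hL₂ : L ≤ K + 1) :
    ∀ x : ℝ,
      x ∈ Set.Icc
        (ω₀' - (Finset.Icc 1 K).sup' (Finset.nonempty_Icc.mpr hK) (fun k => |Δ k|))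
        (ω₀' + (Finset.Icc 1 K).sup' (Finset.nonempty_Icc.mpr hK) (fun k => |Δ k|)) →
      qcost K L (hK.trans hL₁) a ω x =
        2 * Real.pi * ∑ k ∈ Finset.Icc 1 K,
          (a k) ^ 2 * ((k : ℝ) * (x - ω₀') - Δ k) ^ 2 :=
  stmt_6_general K hK a ω Δ ω₀' hfreq hΔ L hL₁ hL₂
end

section
/- Under the inharmonic hypothesis, let L be an integer with K ≤ L ≤ K+1, and define ω₀ = (Σ_{k=1}^K a_k²·k·ω_k)/(Σ_{k=1}^K a_k²·k²). Then: (i) ω₀ ∈ [ω̃₀ − ‖Δ‖∞, ω̃₀ + ‖Δ‖∞]; (ii) for every ω in this interval, q_L(ω) ≥ q_L(ω₀), with equality if and only if ω = ω₀, i.e., q_L has exactly one local (hence global) minimum on the interval, attained at ω₀; and (iii) |ω₀ − ω̃₀| ≤ (Σ_{k=1}^K a_k²·k / Σ_{k=1}^K a_k²·k²)·‖Δ‖∞. -/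
open Finset

/-- Proposition 4, bounded perturbation: under the inharmonic hypothesis,
for `K ≤ L ≤ K+1` and `ω₀ = (Σ a_k² k ω_k)/(Σ a_k² k²)`:
(i) `ω₀ ∈ [ω̃₀ − ‖Δ‖∞, ω̃₀ + ‖Δ‖∞]`;
(ii) on this interval `q_L(ω) ≥ q_L(ω₀)` with equality iff `ω = ω₀`;
(iii) `|ω₀ − ω̃₀| ≤ (Σ a_k² k / Σ a_k² k²)·‖Δ‖∞`. -/
theorem stmt_7 (K : ℕ) (hK : 1 ≤ K) (a ω Δ : ℕ → ℝ)
    (ha : ∀ k ∈ Finset.Icc 1 K, 0 < a k)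
    (ω₀' : ℝ) (hω₀' : 0 < ω₀')
    (hfreq : ∀ k ∈ Finset.Icc 1 K, ω k = (k : ℝ) * ω₀' + Δ k)
    (hΔ : (Finset.Icc 1 K).sup' (Finset.nonempty_Icc.mpr hK) (fun k => |Δ k|)
          < ω₀' / (2 * (K : ℝ) + 3))
    (L : ℕ) (hL₁ : K ≤ L) (hL₂ : L ≤ K + 1) :
    let Δinf := (Finset.Icc 1 K).sup' (Finset.nonempty_Icc.mpr hK) (fun k => |Δ k|)
    let ω₀ := (∑ k ∈ Finset.Icc 1 K, (a k) ^ 2 * (k : ℝ) * ω k) /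
              (∑ k ∈ Finset.Icc 1 K, (a k) ^ 2 * (k : ℝ) ^ 2)
    ω₀ ∈ Set.Icc (ω₀' - Δinf) (ω₀' + Δinf) ∧
    (∀ x ∈ Set.Icc (ω₀' - Δinf) (ω₀' + Δinf),
      qcost K L (hK.trans hL₁) a ω ω₀ ≤ qcost K L (hK.trans hL₁) a ω x ∧
      (qcost K L (hK.trans hL₁) a ω x = qcost K L (hK.trans hL₁) a ω ω₀ ↔ x = ω₀)) ∧
    |ω₀ - ω₀'| ≤ ((∑ k ∈ Finset.Icc 1 K, (a k) ^ 2 * (k : ℝ)) /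
                  (∑ k ∈ Finset.Icc 1 K, (a k) ^ 2 * (k : ℝ) ^ 2)) * Δinf := by
  intro Δinf ω₀
  have hKL : 1 ≤ L := hK.trans hL₁
  have h1K : (1:ℕ) ∈ Finset.Icc 1 K := by simp [hK]
  set d := Δinf with hd
  have hdd : d = (Finset.Icc 1 K).sup' (Finset.nonempty_Icc.mpr hK) (fun k => |Δ k|) := rfl
  have hΔk : ∀ k ∈ Finset.Icc 1 K, |Δ k| ≤ d := by
    intro k hk; rw [hdd]; exact Finset.le_sup' (fun k => |Δ k|) hk
  have hd0 : 0 ≤ d := le_trans (abs_nonneg (Δ 1)) (hΔk 1 h1K)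
  have hdω : (2*(K:ℝ)+3) * d < ω₀' := by
    have hK3 : (0:ℝ) < 2*(K:ℝ)+3 := by positivity
    have := (lt_div_iff₀ hK3).mp hΔ
    linarith
  set S2 := ∑ k ∈ Finset.Icc 1 K, (a k)^2 * (k:ℝ)^2 with hS2def
  set S1 := ∑ k ∈ Finset.Icc 1 K, (a k)^2 * (k:ℝ) with hS1def
  set T := ∑ k ∈ Finset.Icc 1 K, (a k)^2 * (k:ℝ) * ω k with hTdef
  have hS2 : 0 < S2 := by
    apply Finset.sum_pos _ ⟨1, h1K⟩
    intro k hk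
    have hk1 : 1 ≤ k := (Finset.mem_Icc.mp hk).1
    have hak := ha k hk
    have hk0 : (0:ℝ) < (k:ℝ) := by exact_mod_cast hk1
    positivity
  have hS12 : S1 ≤ S2 := by
    apply Finset.sum_le_sum
    intro k hk
    have hk1 : (1:ℝ) ≤ (k:ℝ) := by exact_mod_cast (Finset.mem_Icc.mp hk).1
    nlinarith [mul_nonneg (mul_nonneg (sq_nonneg (a k)) (by linarith : (0:ℝ) ≤ (k:ℝ))) (by linarith : (0:ℝ) ≤ (k:ℝ) - 1)]
  have hS1pos : 0 < S1 := by
    apply Finset.sum_pos _ ⟨1, h1K⟩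
    intro k hk
    have hk1 : 1 ≤ k := (Finset.mem_Icc.mp hk).1
    have hak := ha k hk
    have hk0 : (0:ℝ) < (k:ℝ) := by exact_mod_cast hk1
    positivity
  have hω₀eq : ω₀ = T / S2 := rfl
  clear_value Δinf ω₀ d S2 S1 T
  -- (iii) bound
  have hsub : T - ω₀' * S2 = ∑ k ∈ Finset.Icc 1 K, (a k)^2 * (k:ℝ) * Δ k := by
    rw [hTdef, hS2def, Finset.mul_sum, ← Finset.sum_sub_distrib]
    refine Finset.sum_congr rfl fun k hk => ?_
    rw [hfreq k hk]; ring
  have habs : |T - ω₀' * S2| ≤ S1 * d := by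
    rw [hsub, hS1def, Finset.sum_mul]
    refine le_trans (Finset.abs_sum_le_sum_abs _ _) (Finset.sum_le_sum fun k hk => ?_)
    rw [abs_mul, abs_mul, abs_pow, sq_abs, Nat.abs_cast]
    have := hΔk k hk
    have h1 : (0:ℝ) ≤ (a k)^2 * (k:ℝ) := by positivity
    calc (a k)^2 * (k:ℝ) * |Δ k| ≤ (a k)^2 * (k:ℝ) * d := by
          exact mul_le_mul_of_nonneg_left this h1
      _ = (a k)^2 * (k:ℝ) * d := rfl
  have hiii : |ω₀ - ω₀'| ≤ (S1 / S2) * d := by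
    have : ω₀ - ω₀' = (T - ω₀' * S2) / S2 := by
      rw [hω₀eq]; field_simp
    rw [this, abs_div, abs_of_pos hS2, div_le_iff₀ hS2]
    calc |T - ω₀' * S2| ≤ S1 * d := habs
      _ = S1 / S2 * d * S2 := by field_simp
  -- (i)
  have hfar : |ω₀ - ω₀'| ≤ d := by
    refine hiii.trans ?_
    have : S1 / S2 ≤ 1 := (div_le_one hS2).mpr hS12
    nlinarith
  have hi : ω₀ ∈ Set.Icc (ω₀' - d) (ω₀' + d) := by
    rw [Set.mem_Icc]
    have := abs_le.mp hfar
    constructor <;> linarith [this.1, this.2]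
  -- key inequality: for x in the band, the inf is attained at ℓ = k
  have hmin : ∀ x : ℝ, |x - ω₀'| ≤ d → ∀ k ∈ Finset.Icc 1 K, ∀ ℓ ∈ Finset.Icc 1 L,
      ((k:ℝ) * x - ω k)^2 ≤ ((ℓ:ℝ) * x - ω k)^2 := by
    intro x hx k hk ℓ hℓ
    by_cases hlk : ℓ = k
    · subst hlk; exact le_rfl
    · have hk1 : 1 ≤ k := (Finset.mem_Icc.mp hk).1
      have hkK : k ≤ K := (Finset.mem_Icc.mp hk).2
      have hℓ1 : 1 ≤ ℓ := (Finset.mem_Icc.mp hℓ).1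
      have hℓL : ℓ ≤ L := (Finset.mem_Icc.mp hℓ).2
      have hkKr : (k:ℝ) ≤ (K:ℝ) := by exact_mod_cast hkK
      have hℓKr : (ℓ:ℝ) ≤ (K:ℝ) + 1 := by exact_mod_cast hℓL.trans hL₂
      have hk0 : (0:ℝ) ≤ (k:ℝ) := Nat.cast_nonneg k
      have hℓ0 : (0:ℝ) ≤ (ℓ:ℝ) := Nat.cast_nonneg ℓ
      have hxd := abs_le.mp hx
      have hΔkd := abs_le.mp (hΔk k hk)
      have e1 : |(k:ℝ) * x - ω k| ≤ ((K:ℝ)+1) * d := by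
        rw [hfreq k hk]
        have hA : |(k:ℝ) * (x - ω₀')| ≤ (k:ℝ) * d := by
          rw [abs_mul, Nat.abs_cast]
          exact mul_le_mul_of_nonneg_left hx hk0
        have hA' := abs_le.mp hA
        have hkd : (k:ℝ) * d ≤ (K:ℝ) * d := mul_le_mul_of_nonneg_right hkKr hd0
        rw [abs_le]
        constructor <;> [linarith [hA'.1, hΔkd.2]; linarith [hA'.2, hΔkd.1]]
      have hmabs : (1:ℝ) ≤ |(ℓ:ℝ) - (k:ℝ)| := by
        have h0 : ((ℓ:ℤ) - (k:ℤ)) ≠ 0 := by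
          intro h; apply hlk; omega
        have := Int.one_le_abs h0
        have : (1:ℝ) ≤ |((ℓ:ℤ) - (k:ℤ) : ℤ)| := by exact_mod_cast this
        rwa [Int.cast_abs, Int.cast_sub, Int.cast_natCast, Int.cast_natCast] at this
      have e2 : ω₀' - ((K:ℝ)+2) * d ≤ |(ℓ:ℝ) * x - ω k| := by
        rw [hfreq k hk]
        have keyid : ((ℓ:ℝ) - (k:ℝ)) * ω₀'
            = ((ℓ:ℝ) * x - ((k:ℝ) * ω₀' + Δ k)) - ((ℓ:ℝ) * (x - ω₀') - Δ k) := by ring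
        have h3 : ω₀' ≤ |((ℓ:ℝ) - (k:ℝ)) * ω₀'| := by
          rw [abs_mul, abs_of_pos hω₀']
          nlinarith
        have h4 : |((ℓ:ℝ) - (k:ℝ)) * ω₀'|
            ≤ |(ℓ:ℝ) * x - ((k:ℝ) * ω₀' + Δ k)| + |(ℓ:ℝ) * (x - ω₀') - Δ k| := by
          rw [keyid]; exact abs_sub _ _
        have h5 : |(ℓ:ℝ) * (x - ω₀') - Δ k| ≤ ((K:ℝ)+2) * d := by
          have hB : |(ℓ:ℝ) * (x - ω₀')| ≤ (ℓ:ℝ) * d := by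
            rw [abs_mul, Nat.abs_cast]
            exact mul_le_mul_of_nonneg_left hx hℓ0
          have hB' := abs_le.mp hB
          have hld : (ℓ:ℝ) * d ≤ ((K:ℝ)+1) * d := mul_le_mul_of_nonneg_right hℓKr hd0
          rw [abs_le]
          constructor <;> [linarith [hB'.1, hΔkd.2]; linarith [hB'.2, hΔkd.1]]
        linarith
      have hstep : ((K:ℝ)+1) * d ≤ ω₀' - ((K:ℝ)+2) * d := by linarith
      have habsle : |(k:ℝ) * x - ω k| ≤ |(ℓ:ℝ) * x - ω k| := by linarith
      calc ((k:ℝ) * x - ω k)^2 = |(k:ℝ) * x - ω k|^2 := (sq_abs _).symm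
        _ ≤ |(ℓ:ℝ) * x - ω k|^2 := by
            exact pow_le_pow_left₀ (abs_nonneg _) habsle 2
        _ = ((ℓ:ℝ) * x - ω k)^2 := sq_abs _
  -- qcost formula on the band
  have qeq : ∀ x : ℝ, |x - ω₀'| ≤ d →
      qcost K L (hK.trans hL₁) a ω x = 2 * Real.pi * ∑ k ∈ Finset.Icc 1 K, (a k)^2 * ((k:ℝ) * x - ω k)^2 := by
    intro x hx
    unfold qcost
    congr 1
    refine Finset.sum_congr rfl fun k hk => ?_
    congr 1
    apply le_antisymm
    · have hkL : k ∈ Finset.Icc 1 L := by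
        rw [Finset.mem_Icc] at hk ⊢
        exact ⟨hk.1, hk.2.trans hL₁⟩
      exact Finset.inf'_le _ hkL
    · exact Finset.le_inf' _ _ fun ℓ hℓ => hmin x hx k hk ℓ hℓ
  have hω₀band : |ω₀ - ω₀'| ≤ d := hfar
  -- the difference formula
  have hTS : T = S2 * ω₀ := by
    rw [hω₀eq]; field_simp
  have hdiff : ∀ x : ℝ, |x - ω₀'| ≤ d →
      qcost K L (hK.trans hL₁) a ω x - qcost K L (hK.trans hL₁) a ω ω₀ = 2 * Real.pi * (S2 * (x - ω₀)^2) := by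
    intro x hx
    rw [qeq x hx, qeq ω₀ hω₀band, ← mul_sub, ← Finset.sum_sub_distrib]
    have : ∑ k ∈ Finset.Icc 1 K, ((a k)^2 * ((k:ℝ) * x - ω k)^2 - (a k)^2 * ((k:ℝ) * ω₀ - ω k)^2)
        = S2 * (x^2 - ω₀^2) - 2 * T * (x - ω₀) := by
      rw [hS2def, hTdef, Finset.sum_mul, Finset.mul_sum, Finset.sum_mul,
        ← Finset.sum_sub_distrib]
      refine Finset.sum_congr rfl fun k hk => ?_
      ring
    rw [this, hTS]
    ring
  refine ⟨hi, ?_, hiii⟩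
  intro x hxI
  have hxband : |x - ω₀'| ≤ d := by
    rw [Set.mem_Icc] at hxI
    rw [abs_le]; constructor <;> linarith [hxI.1, hxI.2]
  have hD := hdiff x hxband
  have hpi : (0:ℝ) < 2 * Real.pi := by positivity
  constructor
  · have hpos : 0 ≤ 2 * Real.pi * (S2 * (x - ω₀)^2) := by positivity
    linarith
  · constructor
    · intro heq
      rw [heq, sub_self] at hD
      have h0 : (x - ω₀)^2 = 0 := by
        rcases mul_eq_zero.mp hD.symm with h | h
        · exact absurd h (by positivity)
        · rcases mul_eq_zero.mp h with h' | h'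
          · exact absurd h' (ne_of_gt hS2)
          · exact h'
      have := pow_eq_zero_iff (n := 2) (by norm_num) |>.mp h0
      linarith
    · intro h; rw [h]
end
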